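/- The group Aut_Hopf(H_4) of Hopf algebra automorphisms of Sweedler's Hopf algebra H_4 is isomorphic to the multiplicative group k^* of units of k; explicitly, every automorphism has the form 1 ↦ 1, g ↦ g, x ↦ βx, gx ↦ βgx for a unique β ∈ k^*. -/

import Mathlib

/-!
A Hopf automorphism `ψ` sends the group-like element `g` to a group-like element, and the only
group-likes of `H₄` are `1` and `g`, so `ψ g = g`. Then `ψ x` is `(1, g)`-skew-primitive and
anticommutes with `g`; in the basis `{1, g, x, gx}` the first condition kills the `gx`-coordinate
and the second, as `2 ≠ 0`, the `1`- and `g`-coordinates, so `ψ x = β x`, and `β` is a unit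
because `ψ⁻¹` also rescales `x`. Conversely, for every `c ∈ k` the linear map fixing `1, g` and
multiplying `x, gx` by `c` is a bialgebra endomorphism, multiplicative in `c`; and an
automorphism is determined by its values on `g` and `x`.
-/

open TensorProduct

noncomputable section

/-- `H` is (a model of) Sweedler's 4-dimensional Hopf algebra `H₄` with generators `g`, `x`:
`g² = 1`, `x² = 0`, `xg = -gx`, the family `{1, g, x, gx}` is a basis of `H`, `g` is
group-like, `x` is `(1, g)`-primitive, and `S(g) = g`, `S(x) = -gx`. -/
structure IsSweedler (k : Type*) [CommRing k] (H : Type*) [Ring H] [HopfAlgebra k H]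
    (g x : H) : Prop where
  g_sq : g * g = 1
  x_sq : x * x = 0
  x_mul_g : x * g = -(g * x)
  li : LinearIndependent k ![(1 : H), g, x, g * x]
  span : Submodule.span k {(1 : H), g, x, g * x} = ⊤
  comul_g : Coalgebra.comul (R := k) g = g ⊗ₜ[k] g
  comul_x : Coalgebra.comul (R := k) x = x ⊗ₜ[k] (1 : H) + g ⊗ₜ[k] x
  counit_g : Coalgebra.counit (R := k) g = 1
  counit_x : Coalgebra.counit (R := k) x = 0
  antipode_g : HopfAlgebra.antipode (R := k) g = g
  antipode_x : HopfAlgebra.antipode (R := k) x = -(g * x)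

namespace IsSweedler

variable {k : Type*} [CommRing k] {H : Type*} [Ring H] [HopfAlgebra k H] {g x : H}

theorem g_mul_gx (hs : IsSweedler k H g x) : g * (g * x) = x := by
  rw [← mul_assoc, hs.g_sq, one_mul]

theorem gx_mul_g (hs : IsSweedler k H g x) : g * x * g = -x := by
  rw [mul_assoc, hs.x_mul_g, mul_neg, hs.g_mul_gx]

theorem x_mul_gx (hs : IsSweedler k H g x) : x * (g * x) = 0 := by
  rw [← mul_assoc, hs.x_mul_g, neg_mul, mul_assoc, hs.x_sq, mul_zero, neg_zero]

theorem gx_mul_x (hs : IsSweedler k H g x) : g * x * x = 0 := by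
  rw [mul_assoc, hs.x_sq, mul_zero]

theorem gx_mul_gx (hs : IsSweedler k H g x) : g * x * (g * x) = 0 := by
  rw [mul_assoc, hs.x_mul_gx, mul_zero]

theorem isGroupLikeElem_g (hs : IsSweedler k H g x) : IsGroupLikeElem k g :=
  ⟨hs.counit_g, hs.comul_g⟩

theorem comul_gx (hs : IsSweedler k H g x) :
    Coalgebra.comul (R := k) (g * x) = (g * x) ⊗ₜ[k] g + (1 : H) ⊗ₜ[k] (g * x) := by
  rw [Bialgebra.comul_mul, hs.comul_g, hs.comul_x, mul_add, Algebra.TensorProduct.tmul_mul_tmul,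
    Algebra.TensorProduct.tmul_mul_tmul, mul_one, hs.g_sq]

theorem counit_gx (hs : IsSweedler k H g x) : Coalgebra.counit (R := k) (g * x) = 0 := by
  rw [Bialgebra.counit_mul, hs.counit_g, hs.counit_x, mul_zero]

def basis (hs : IsSweedler k H g x) : Module.Basis (Fin 4) k H :=
  .mk hs.li <| by
    rw [Matrix.range_cons, Matrix.range_cons, Matrix.range_cons, Matrix.range_cons,
      Matrix.range_empty, Set.union_empty]
    simp only [Set.singleton_union, hs.span, le_refl]

@[simp]
theorem coe_basis (hs : IsSweedler k H g x) : ⇑hs.basis = ![1, g, x, g * x] :=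
  Module.Basis.coe_mk _ _

@[simp]
theorem repr_one (hs : IsSweedler k H g x) : hs.basis.repr 1 = Finsupp.single 0 1 := by
  simpa using hs.basis.repr_self 0

@[simp]
theorem repr_g (hs : IsSweedler k H g x) : hs.basis.repr g = Finsupp.single 1 1 := by
  simpa using hs.basis.repr_self 1

@[simp]
theorem repr_x (hs : IsSweedler k H g x) : hs.basis.repr x = Finsupp.single 2 1 := by
  simpa using hs.basis.repr_self 2

@[simp]
theorem repr_gx (hs : IsSweedler k H g x) : hs.basis.repr (g * x) = Finsupp.single 3 1 := by
  simpa using hs.basis.repr_self 3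

theorem exists_eq_linearCombination (hs : IsSweedler k H g x) (h : H) :
    ∃ a b c d : k, h = a • (1 : H) + b • g + c • x + d • (g * x) :=
  ⟨_, _, _, _, by simpa [Fin.sum_univ_four] using (hs.basis.sum_repr h).symm⟩

theorem smul_x_injective (hs : IsSweedler k H g x) : Function.Injective fun c : k => c • x :=
  fun c d h => by simpa using congrArg (hs.basis.repr · 2) h

def tensorCoord (hs : IsSweedler k H g x) (i j : Fin 4) : H ⊗[k] H →ₗ[k] k :=
  (hs.basis.tensorProduct hs.basis).coord (i, j)

@[simp]
theorem tensorCoord_tmul (hs : IsSweedler k H g x) (i j : Fin 4) (m n : H) :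
    hs.tensorCoord i j (m ⊗ₜ n) = hs.basis.repr m i * hs.basis.repr n j := by
  simp [tensorCoord, Module.Basis.tensorProduct_repr_tmul_apply, mul_comm]

def scaleX (hs : IsSweedler k H g x) (c : k) : H →ₗ[k] H :=
  hs.basis.constr k ![1, g, c • x, c • (g * x)]

section scaleX

variable (hs : IsSweedler k H g x) (c : k)

@[simp]
theorem scaleX_apply_one : hs.scaleX c 1 = 1 := by
  simpa [scaleX] using hs.basis.constr_basis k ![1, g, c • x, c • (g * x)] 0

@[simp]
theorem scaleX_apply_g : hs.scaleX c g = g := by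
  simpa [scaleX] using hs.basis.constr_basis k ![1, g, c • x, c • (g * x)] 1

@[simp]
theorem scaleX_apply_x : hs.scaleX c x = c • x := by
  simpa [scaleX] using hs.basis.constr_basis k ![1, g, c • x, c • (g * x)] 2

@[simp]
theorem scaleX_apply_gx : hs.scaleX c (g * x) = c • (g * x) := by
  simpa [scaleX] using hs.basis.constr_basis k ![1, g, c • x, c • (g * x)] 3

theorem scaleX_mul (d : k) : hs.scaleX (c * d) = hs.scaleX c ∘ₗ hs.scaleX d :=
  hs.basis.ext fun i => by fin_cases i <;> simp [mul_smul, smul_comm c d]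

theorem scaleX_one : hs.scaleX 1 = LinearMap.id :=
  hs.basis.ext fun i => by fin_cases i <;> simp

theorem scaleX_map_mul (a b : H) : hs.scaleX c (a * b) = hs.scaleX c a * hs.scaleX c b := by
  have h : (LinearMap.mul k H).compr₂ (hs.scaleX c)
      = (LinearMap.mul k H).compl₁₂ (hs.scaleX c) (hs.scaleX c) :=
    hs.basis.ext fun i => hs.basis.ext fun j => by
      fin_cases i <;> fin_cases j <;>
        simp [hs.g_sq, hs.x_sq, hs.x_mul_g, hs.g_mul_gx, hs.gx_mul_g, hs.x_mul_gx, hs.gx_mul_x,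
          hs.gx_mul_gx]
  exact LinearMap.congr_fun₂ h a b

theorem counit_comp_scaleX :
    Coalgebra.counit (R := k) ∘ₗ hs.scaleX c = Coalgebra.counit :=
  hs.basis.ext fun i => by fin_cases i <;> simp [hs.counit_g, hs.counit_x, hs.counit_gx]

theorem map_scaleX_comp_comul :
    TensorProduct.map (hs.scaleX c) (hs.scaleX c) ∘ₗ Coalgebra.comul
      = Coalgebra.comul (R := k) ∘ₗ hs.scaleX c :=
  hs.basis.ext fun i => by
    fin_cases i <;>
      simp [Algebra.TensorProduct.one_def, hs.comul_g, hs.comul_x, hs.comul_gx,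
        smul_tmul', tmul_smul]

def scaleXBialgHom : H →ₐc[k] H where
  toLinearMap := hs.scaleX c
  counit_comp := hs.counit_comp_scaleX c
  map_comp_comul := hs.map_scaleX_comp_comul c
  map_one' := hs.scaleX_apply_one c
  map_mul' := hs.scaleX_map_mul c

theorem scaleXBialgHom_one : hs.scaleXBialgHom 1 = BialgHom.id k H :=
  BialgHom.ext (LinearMap.congr_fun hs.scaleX_one)

theorem scaleXBialgHom_mul (d : k) :
    hs.scaleXBialgHom (c * d) = (hs.scaleXBialgHom c).comp (hs.scaleXBialgHom d) :=
  BialgHom.ext fun a => LinearMap.congr_fun (hs.scaleX_mul c d) a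

end scaleX

def scaleXEquiv (hs : IsSweedler k H g x) (β : kˣ) : H ≃ₐc[k] H :=
  .ofBialgHom (hs.scaleXBialgHom β) (hs.scaleXBialgHom ↑β⁻¹)
    (by rw [← scaleXBialgHom_mul, Units.mul_inv, scaleXBialgHom_one])
    (by rw [← scaleXBialgHom_mul, Units.inv_mul, scaleXBialgHom_one])

@[simp]
theorem scaleXEquiv_apply (hs : IsSweedler k H g x) (β : kˣ) (a : H) :
    hs.scaleXEquiv β a = hs.scaleX β a := rfl

theorem scaleXEquiv_mul (hs : IsSweedler k H g x) (α β : kˣ) :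
    hs.scaleXEquiv (α * β) = (hs.scaleXEquiv β).trans (hs.scaleXEquiv α) :=
  BialgEquiv.ext fun a => LinearMap.congr_fun (hs.scaleX_mul α β) a

theorem bialgEquiv_ext (hs : IsSweedler k H g x) {ψ φ : H ≃ₐc[k] H} (hg : ψ g = φ g)
    (hx : ψ x = φ x) : ψ = φ := by
  have h : (ψ : H →ₗ[k] H) = φ :=
    hs.basis.ext fun i => by fin_cases i <;> simp [map_mul, hg, hx]
  exact BialgEquiv.ext (LinearMap.congr_fun h)

section IsDomain

variable [IsDomain k]

theorem g_ne_one (hs : IsSweedler k H g x) : g ≠ 1 := by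
  simpa using hs.basis.injective.ne (show (1 : Fin 4) ≠ 0 by decide)

theorem eq_one_or_eq_g_of_isGroupLikeElem (hs : IsSweedler k H g x) {h : H}
    (hh : IsGroupLikeElem k h) : h = 1 ∨ h = g := by
  obtain ⟨a, b, c, d, rfl⟩ := hs.exists_eq_linearCombination h
  have hΔ := hh.comul_eq_tmul_self
  have hε := hh.counit_eq_one
  simp only [map_add, map_smul, Bialgebra.comul_one, Algebra.TensorProduct.one_def, hs.comul_g,
    hs.comul_x, hs.comul_gx, Bialgebra.counit_one, hs.counit_g, hs.counit_x, hs.counit_gx]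
    at hΔ hε
  -- the coordinates (1, 0), (2, 2), (3, 3) of `Δ h = h ⊗ h` read `0 = ab`, `0 = c²`, `0 = d²`
  have hab := congrArg (hs.tensorCoord 1 0) hΔ
  have hc := congrArg (hs.tensorCoord 2 2) hΔ
  have hd := congrArg (hs.tensorCoord 3 3) hΔ
  simp [tmul_add, add_tmul] at hab hc hd hε
  subst hc hd
  rcases hab with rfl | rfl
  · rw [zero_add] at hε
    simp [hε]
  · rw [add_zero] at hε
    simp [hε]

theorem exists_eq_smul_x_of_comul_eq (hs : IsSweedler k H g x) (h2 : (2 : k) ≠ 0) {h : H}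
    (hΔ : Coalgebra.comul (R := k) h = h ⊗ₜ[k] (1 : H) + g ⊗ₜ[k] h) (hg : h * g = -(g * h)) :
    ∃ c : k, h = c • x := by
  obtain ⟨a, b, c, d, rfl⟩ := hs.exists_eq_linearCombination h
  simp only [map_add, map_smul, Bialgebra.comul_one, Algebra.TensorProduct.one_def, hs.comul_g,
    hs.comul_x, hs.comul_gx] at hΔ
  -- the `gx ⊗ g` coordinate of `Δ h` is `d` on the left and `0` on the right
  have hd := congrArg (hs.tensorCoord 3 1) hΔ
  have ha := congrArg (hs.basis.repr · 1) hg
  have hb := congrArg (hs.basis.repr · 0) hg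
  simp [tmul_add, add_tmul, add_mul, mul_add, hs.g_sq, hs.x_mul_g, hs.gx_mul_g, hs.g_mul_gx]
    at hd ha hb
  have eq_zero_of_eq_neg : ∀ t : k, t = -t → t = 0 := fun t ht =>
    (mul_eq_zero.mp (by linear_combination ht : (2 : k) * t = 0)).resolve_left h2
  refine ⟨c, ?_⟩
  rw [eq_zero_of_eq_neg a ha, eq_zero_of_eq_neg b hb, hd]
  simp

theorem map_g (hs : IsSweedler k H g x) (ψ : H ≃ₐc[k] H) : ψ g = g :=
  (hs.eq_one_or_eq_g_of_isGroupLikeElem (hs.isGroupLikeElem_g.map ψ)).resolve_left fun h =>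
    hs.g_ne_one (ψ.injective (h.trans (map_one ψ).symm))

theorem exists_map_x_eq_smul (hs : IsSweedler k H g x) (h2 : (2 : k) ≠ 0) (ψ : H ≃ₐc[k] H) :
    ∃ c : k, ψ x = c • x := by
  refine hs.exists_eq_smul_x_of_comul_eq h2 ?_ ?_
  · rw [← CoalgHomClass.map_comp_comul_apply, hs.comul_x]
    simp [hs.map_g ψ]
  · rw [← hs.map_g ψ, ← map_mul, hs.x_mul_g, map_neg, map_mul]

theorem exists_unit_map_x_eq_smul (hs : IsSweedler k H g x) (h2 : (2 : k) ≠ 0)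
    (ψ : H ≃ₐc[k] H) : ∃ β : kˣ, ψ x = (β : k) • x := by
  obtain ⟨c, hc⟩ := hs.exists_map_x_eq_smul h2 ψ
  obtain ⟨d, hd⟩ := hs.exists_map_x_eq_smul h2 ψ.symm
  have hdc : d * c = 1 := hs.smul_x_injective <| show (d * c) • x = (1 : k) • x by
    rw [one_smul, mul_smul, ← hc, ← map_smul, ← hd, BialgEquiv.apply_symm_apply]
  exact ⟨⟨c, d, by rw [mul_comm, hdc], hdc⟩, hc⟩

end IsDomain

end IsSweedler

/-- The group of Hopf algebra automorphisms of Sweedler's Hopf algebra `H₄` is isomorphic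
to the multiplicative group `kˣ`: explicitly, every automorphism fixes `1` and `g` and
is of the form `x ↦ βx`, `gx ↦ βgx` for a unique `β ∈ kˣ`, and there is a bijection
`Γ : kˣ → Aut_Hopf(H₄)` with `Γ(αβ) = Γ(α) ∘ Γ(β)`. -/
theorem sweedler_hopf_automorphism_group
    {k : Type*} [Field k] (hchar : (2 : k) ≠ 0) {H : Type*} [Ring H] [HopfAlgebra k H]
    {g x : H} (hs : IsSweedler k H g x) :
    (∀ ψ : H ≃ₐc[k] H, ∃! β : kˣ,
      ψ 1 = 1 ∧ ψ g = g ∧ ψ x = (β : k) • x ∧ ψ (g * x) = (β : k) • (g * x)) ∧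
    ∃ Γ : kˣ → (H ≃ₐc[k] H), Function.Bijective Γ ∧
      ∀ α β : kˣ, Γ (α * β) = (Γ β).trans (Γ α) := by
  refine ⟨fun ψ => ?_, hs.scaleXEquiv, ⟨fun α β h => ?_, fun ψ => ?_⟩, hs.scaleXEquiv_mul⟩
  · obtain ⟨β, hβ⟩ := hs.exists_unit_map_x_eq_smul hchar ψ
    refine ⟨β, ⟨map_one ψ, hs.map_g ψ, hβ, by rw [map_mul, hs.map_g ψ, hβ, mul_smul_comm]⟩, ?_⟩
    rintro γ ⟨-, -, hγ, -⟩
    exact Units.ext (hs.smul_x_injective (hγ.symm.trans hβ))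
  · exact Units.ext (hs.smul_x_injective (by simpa using DFunLike.congr_fun h x))
  · obtain ⟨β, hβ⟩ := hs.exists_unit_map_x_eq_smul hchar ψ
    exact ⟨β, hs.bialgEquiv_ext (by simp [hs.map_g ψ]) (by simp [hβ])⟩

end
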